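/- arXiv:2104.01737 — 6 statements merged into one kernel-verified Lean document; each statement's English description precedes it below -/
import Mathlib

section
/- For all real numbers A ≥ B ≥ 0 and real p ≥ 1, one has (A - B)^p ≤ A^p - p·(A - B)^{p-1}·B. -/
/-! The map `t ↦ t ^ p` is convex on `[0, ∞)` for `p ≥ 1`, so it lies above its tangent line at
`A - B`; evaluating that tangent line at `A = (A - B) + B` gives the inequality. For `x > 0` the
tangent-line bound is Bernoulli's inequality `1 + p s ≤ (1 + s) ^ p` with `s = y / x`, rescaled
by `x ^ p`. -/

namespace Real

theorem rpow_add_mul_rpow_sub_one_mul_le_rpow_add {x y p : ℝ} (hx : 0 ≤ x) (hxy : 0 ≤ x + y)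
    (hp : 1 ≤ p) : x ^ p + p * x ^ (p - 1) * y ≤ (x + y) ^ p := by
  rcases hx.eq_or_lt with rfl | hx
  · rw [zero_add] at hxy ⊢
    rcases hp.eq_or_lt with rfl | hp
    · simp
    · rw [zero_rpow (by linarith), zero_rpow (by linarith)]
      simpa using rpow_nonneg hxy p
  · have hs : -1 ≤ y / x := by rw [le_div_iff₀ hx]; linarith
    have bernoulli := one_add_mul_self_le_rpow_one_add hs hp
    have hscale : x ^ p * (y / x) = x ^ (p - 1) * y := by
      rw [rpow_sub_one hx.ne']
      ring
    calc x ^ p + p * x ^ (p - 1) * y = x ^ p * (1 + p * (y / x)) := by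
          rw [mul_add, mul_one, mul_left_comm, hscale, mul_assoc]
      _ ≤ x ^ p * (1 + y / x) ^ p := by gcongr
      _ = (x + y) ^ p := by
          rw [← mul_rpow hx.le (by linarith), mul_one_add, mul_div_cancel₀ _ hx.ne']

end Real

theorem stmt_0 (A B p : ℝ) (hB : 0 ≤ B) (hAB : B ≤ A) (hp : 1 ≤ p) :
    (A - B) ^ p ≤ A ^ p - p * (A - B) ^ (p - 1) * B := by
  have tangent := Real.rpow_add_mul_rpow_sub_one_mul_le_rpow_add (sub_nonneg.2 hAB)
    (by linarith : 0 ≤ A - B + B) hp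
  rw [sub_add_cancel] at tangent
  linarith
end

section
/- Let a ∈ ℝ, p ≥ 1, R > 0, and let w ∈ C¹((0,R)) satisfy lim_{r→0⁺} r^{a+1-p}|w(r)|^p = 0 and lim_{r→R⁻} w(r) = 0. Then |(a+1-p)/p|^p · ∫₀^R r^{a-p}|w(r)|^p dr ≤ ∫₀^R r^a |w'(r)|^p dr. -/
open MeasureTheory Set Filter Topology
open scoped ENNReal

/-!
Integration by parts on a compact subinterval `[δ, η] ⊆ (0, R)`: with `c = a + 1 - p`,
differentiating `r ^ c * |w r| ^ p` gives
`|c| ∫_δ^η r^(c-1) |w|^p ≤ δ^c |w δ|^p + η^c |w η|^p + p ∫_δ^η r^c |w|^(p-1) |w'|`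
(`|w|` need not be differentiable, so it is first replaced by `√(w² + ε²)`, and then `ε → 0`).
Hölder's inequality with exponents `p / (p - 1)` and `p` bounds the last integral by
`E ^ (1 - 1/p) * J ^ (1/p)`, where `E` is the integral on the left and
`J = ∫_0^R r^a |w'|^p`.
Dividing by `E ^ (1 - 1/p)` before letting `δ → 0⁺`, `η → R⁻`, where the boundary terms vanish,
gives `|c / p| * I ^ (1/p) ≤ J ^ (1/p)` for `I = ∫_0^R r^(a-p) |w|^p`, without knowing in
advance that `I` is finite.
-/

theorem continuous_parametric_intervalIntegral_of_continuousOn {X : Type*}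
    [TopologicalSpace X] {f : X → ℝ → ℝ} {a b : ℝ} (hab : a ≤ b)
    (hf : ContinuousOn (Function.uncurry f) (univ ×ˢ Icc a b)) :
    Continuous fun x => ∫ t in a..b, f x t := by
  have hg : Continuous fun q : X × ℝ => f q.1 (projIcc a b hab q.2) :=
    hf.comp_continuous (f := fun q : X × ℝ => (q.1, (projIcc a b hab q.2 : ℝ)))
      (continuous_fst.prodMk
        (continuous_subtype_val.comp (continuous_projIcc.comp continuous_snd)))
      fun q => ⟨trivial, (projIcc a b hab q.2).2⟩
  refine (intervalIntegral.continuous_parametric_intervalIntegral_of_continuous'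
    (μ := volume) (f := fun x t => f x (projIcc a b hab t)) hg a b).congr fun x => ?_
  refine intervalIntegral.integral_congr fun t ht => ?_
  rw [uIcc_of_le hab] at ht
  simp [projIcc_of_mem hab ht]

theorem abs_mul_integral_rpow_mul_rpow_le {c p δ η : ℝ} {s s' g : ℝ → ℝ} (hp : 0 ≤ p)
    (hδ : 0 < δ) (hδη : δ ≤ η) (hs : ∀ x ∈ Icc δ η, HasDerivAt s (s' x) x)
    (hs' : ContinuousOn s' (Icc δ η)) (hspos : ∀ x ∈ Icc δ η, 0 < s x)
    (hg : ContinuousOn g (Icc δ η))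
    (hs'g : ∀ x ∈ Icc δ η, |s' x| ≤ g x) :
    |c| * ∫ x in δ..η, x ^ (c - 1) * s x ^ p ≤
      δ ^ c * s δ ^ p + η ^ c * s η ^ p + p * ∫ x in δ..η, x ^ c * (s x ^ (p - 1) * g x) := by
  have hx0 : ∀ x ∈ Icc δ η, 0 < x := fun x hx => hδ.trans_le hx.1
  have hsc : ContinuousOn s (Icc δ η) := fun x hx =>
    (hs x hx).continuousAt.continuousWithinAt
  have hpow : ∀ e : ℝ, ContinuousOn (fun x => x ^ e) (Icc δ η) := fun e =>
    continuousOn_id.rpow_const fun x hx => Or.inl (hx0 x hx).ne'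
  have hspow : ∀ e : ℝ, ContinuousOn (fun x => s x ^ e) (Icc δ η) := fun e =>
    hsc.rpow_const fun x hx => Or.inl (hspos x hx).ne'
  have hF : ∀ x ∈ uIcc δ η, HasDerivAt (fun x => x ^ c * s x ^ p)
      (c * (x ^ (c - 1) * s x ^ p) + p * (x ^ c * (s x ^ (p - 1) * s' x))) x := by
    intro x hx
    rw [uIcc_of_le hδη] at hx
    refine ((Real.hasDerivAt_rpow_const (p := c) (Or.inl (hx0 x hx).ne')).mul
      ((hs x hx).rpow_const (p := p) (Or.inl (hspos x hx).ne'))).congr_deriv (by ring)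
  have hL : IntervalIntegrable (fun x => x ^ (c - 1) * s x ^ p) volume δ η :=
    ((hpow (c - 1)).mul (hspow p)).intervalIntegrable_of_Icc hδη
  have hM : IntervalIntegrable (fun x => x ^ c * (s x ^ (p - 1) * s' x)) volume δ η :=
    ((hpow c).mul ((hspow (p - 1)).mul hs')).intervalIntegrable_of_Icc hδη
  have hftc := intervalIntegral.integral_eq_sub_of_hasDerivAt hF
    ((hL.const_mul c).add (hM.const_mul p))
  rw [intervalIntegral.integral_add (hL.const_mul c) (hM.const_mul p),
    intervalIntegral.integral_const_mul, intervalIntegral.integral_const_mul] at hftc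
  have hL0 : 0 ≤ ∫ x in δ..η, x ^ (c - 1) * s x ^ p :=
    intervalIntegral.integral_nonneg hδη fun x hx => by
      have := hx0 x hx; have := hspos x hx; positivity
  have hMg : |p * ∫ x in δ..η, x ^ c * (s x ^ (p - 1) * s' x)| ≤
      p * ∫ x in δ..η, x ^ c * (s x ^ (p - 1) * g x) := by
    rw [abs_mul, abs_of_nonneg hp]
    refine mul_le_mul_of_nonneg_left ((intervalIntegral.abs_integral_le_integral_abs hδη).trans
      (intervalIntegral.integral_mono_on hδη hM.abs
        (((hpow c).mul ((hspow (p - 1)).mul hg)).intervalIntegrable_of_Icc hδη)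
        fun x hx => ?_)) hp
    have := hx0 x hx; have := hspos x hx
    rw [abs_mul, abs_mul, abs_of_pos (by positivity), abs_of_pos (by positivity)]
    gcongr
    exact hs'g x hx
  have hδ0 : 0 ≤ δ ^ c * s δ ^ p := by
    have := hspos δ (left_mem_Icc.2 hδη); positivity
  have hη0 : 0 ≤ η ^ c * s η ^ p := by
    have := hspos η (right_mem_Icc.2 hδη); have := hδ.trans_le hδη; positivity
  rw [← abs_of_nonneg hL0, ← abs_mul, abs_le]
  constructor <;> linarith [abs_le.1 hMg]

theorem abs_mul_integral_rpow_mul_abs_rpow_le {c p δ η : ℝ} {w w' : ℝ → ℝ} (hp : 1 ≤ p)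
    (hδ : 0 < δ) (hδη : δ ≤ η) (hw : ∀ x ∈ Icc δ η, HasDerivAt w (w' x) x)
    (hw' : ContinuousOn w' (Icc δ η)) :
    |c| * ∫ x in δ..η, x ^ (c - 1) * |w x| ^ p ≤
      δ ^ c * |w δ| ^ p + η ^ c * |w η| ^ p +
        p * ∫ x in δ..η, x ^ c * (|w x| ^ (p - 1) * |w' x|) := by
  have hx0 : ∀ x ∈ Icc δ η, 0 < x := fun x hx => hδ.trans_le hx.1
  have hwc : ContinuousOn w (Icc δ η) := fun x hx => (hw x hx).continuousAt.continuousWithinAt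
  let s : ℝ → ℝ → ℝ := fun ε x => √(w x ^ 2 + ε ^ 2)
  have hs0 : s 0 = fun x => |w x| := by ext x; simp [s, Real.sqrt_sq_eq_abs]
  have hsε : ∀ ε ∈ Ioi (0 : ℝ), |c| * ∫ x in δ..η, x ^ (c - 1) * s ε x ^ p ≤
      δ ^ c * s ε δ ^ p + η ^ c * s ε η ^ p +
        p * ∫ x in δ..η, x ^ c * (s ε x ^ (p - 1) * |w' x|) := by
    rintro ε (hε : 0 < ε)
    have hpos : ∀ x, 0 < s ε x := fun x => Real.sqrt_pos.2 (by positivity)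
    have hsc : ContinuousOn (s ε) (Icc δ η) := ((hwc.pow 2).add continuousOn_const).sqrt
    refine abs_mul_integral_rpow_mul_rpow_le (s' := fun x => w x * w' x / s ε x) (by linarith)
      hδ hδη (fun x hx => ?_) ((hwc.mul hw').div hsc fun x _ => (hpos x).ne') (fun x _ => hpos x)
      hw'.abs fun x _ => ?_
    · refine (((hw x hx).pow 2).add_const (ε ^ 2)).sqrt (Real.sqrt_pos.1 (hpos x)).ne'
        |>.congr_deriv ?_
      simp only [s, Pi.pow_apply]
      field_simp
      norm_num
      ring
    · rw [abs_div, abs_mul, abs_of_pos (hpos x), mul_div_right_comm]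
      refine mul_le_of_le_one_left (abs_nonneg _) ((div_le_one (hpos x)).2 ?_)
      exact Real.abs_le_sqrt (le_add_of_nonneg_right (sq_nonneg ε))
  have hsc : ContinuousOn (fun q : ℝ × ℝ => s q.1 q.2) (univ ×ˢ Icc δ η) :=
    (((hwc.comp continuousOn_snd fun q hq => hq.2).pow 2).add (continuousOn_fst.pow 2)).sqrt
  have hpow : ∀ e : ℝ, ContinuousOn (fun q : ℝ × ℝ => q.2 ^ e) (univ ×ˢ Icc δ η) := fun e =>
    continuousOn_snd.rpow_const fun q hq => Or.inl (hx0 q.2 hq.2).ne'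
  have hleft : Continuous fun ε => |c| * ∫ x in δ..η, x ^ (c - 1) * s ε x ^ p :=
    continuous_const.mul <| continuous_parametric_intervalIntegral_of_continuousOn hδη <|
      (hpow (c - 1)).mul (hsc.rpow_const fun _ _ => Or.inr (by linarith))
  have hright : Continuous fun ε => δ ^ c * s ε δ ^ p + η ^ c * s ε η ^ p +
      p * ∫ x in δ..η, x ^ c * (s ε x ^ (p - 1) * |w' x|) := by
    refine Continuous.add (by fun_prop (disch := linarith)) (continuous_const.mul <|
      continuous_parametric_intervalIntegral_of_continuousOn hδη <| (hpow c).mul <|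
        (hsc.rpow_const fun _ _ => Or.inr (by linarith)).mul
          (hw'.comp continuousOn_snd fun q hq => hq.2).abs)
  have h := ContinuousWithinAt.closure_le (x := 0) (by simp) hleft.continuousWithinAt
    hright.continuousWithinAt hsε
  simpa only [hs0] using h

theorem ofReal_rpow_mul_abs_eq_rpow_mul_rpow {a p r y z : ℝ} (hp : 1 ≤ p) (hr : 0 < r) :
    ENNReal.ofReal (r ^ (a + 1 - p) * (|y| ^ (p - 1) * |z|)) =
      ENNReal.ofReal (r ^ (a - p) * |y| ^ p) ^ (1 - p⁻¹) *
        ENNReal.ofReal (r ^ a * |z| ^ p) ^ p⁻¹ := by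
  have hp0 : 0 < p := by linarith
  have hq : 0 ≤ 1 - p⁻¹ := sub_nonneg.2 (inv_le_one_of_one_le₀ hp)
  rw [ENNReal.ofReal_rpow_of_nonneg (by positivity) hq,
    ENNReal.ofReal_rpow_of_nonneg (by positivity) (by positivity),
    ← ENNReal.ofReal_mul (by positivity), Real.mul_rpow (by positivity) (by positivity),
    Real.mul_rpow (by positivity) (by positivity), ← Real.rpow_mul hr.le, ← Real.rpow_mul hr.le,
    ← Real.rpow_mul (abs_nonneg _), ← Real.rpow_mul (abs_nonneg _), mul_inv_cancel₀ hp0.ne',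
    Real.rpow_one, show p * (1 - p⁻¹) = p - 1 by field_simp,
    show a + 1 - p = (a - p) * (1 - p⁻¹) + a * p⁻¹ by field_simp; ring, Real.rpow_add hr]
  ring_nf

theorem ofReal_intervalIntegral_eq_setLIntegral {f : ℝ → ℝ} {a b : ℝ} (hab : a ≤ b)
    (hf : IntervalIntegrable f volume a b) (hf0 : ∀ x ∈ Ioc a b, 0 ≤ f x) :
    ENNReal.ofReal (∫ x in a..b, f x) = ∫⁻ x in Ioc a b, ENNReal.ofReal (f x) := by
  rw [intervalIntegral.integral_of_le hab]
  exact ofReal_integral_eq_lintegral_ofReal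
    ((intervalIntegrable_iff_integrableOn_Ioc_of_le hab).1 hf)
    ((ae_restrict_iff' measurableSet_Ioc).2 (.of_forall hf0))

theorem ofReal_mul_setLIntegral_Ioc_le {a p δ η : ℝ} {w w' : ℝ → ℝ} (hp : 1 ≤ p) (hδ : 0 < δ)
    (hδη : δ ≤ η) (hw : ∀ x ∈ Icc δ η, HasDerivAt w (w' x) x) (hw' : ContinuousOn w' (Icc δ η)) :
    ENNReal.ofReal |(a + 1 - p) / p| * ∫⁻ x in Ioc δ η, ENNReal.ofReal (x ^ (a - p) * |w x| ^ p) ≤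
      ENNReal.ofReal ((δ ^ (a + 1 - p) * |w δ| ^ p + η ^ (a + 1 - p) * |w η| ^ p) / p) +
        (∫⁻ x in Ioc δ η, ENNReal.ofReal (x ^ (a - p) * |w x| ^ p)) ^ (1 - p⁻¹) *
          (∫⁻ x in Ioc δ η, ENNReal.ofReal (x ^ a * |w' x| ^ p)) ^ p⁻¹ := by
  have hp0 : 0 < p := by linarith
  have hx0 : ∀ x ∈ Icc δ η, 0 < x := fun x hx => hδ.trans_le hx.1
  have hwc : ContinuousOn w (Icc δ η) := fun x hx => (hw x hx).continuousAt.continuousWithinAt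
  have hpow : ∀ e : ℝ, ContinuousOn (fun x => x ^ e) (Icc δ η) := fun e =>
    continuousOn_id.rpow_const fun x hx => Or.inl (hx0 x hx).ne'
  have hwp : ∀ e : ℝ, 0 ≤ e → ContinuousOn (fun x => |w x| ^ e) (Icc δ η) := fun e he =>
    hwc.abs.rpow_const fun _ _ => Or.inr he
  have hreal := abs_mul_integral_rpow_mul_abs_rpow_le (c := a + 1 - p) hp hδ hδη hw hw'
  rw [show a + 1 - p - 1 = a - p by ring] at hreal
  have hL := ofReal_intervalIntegral_eq_setLIntegral (f := fun x => x ^ (a - p) * |w x| ^ p) hδη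
    (((hpow (a - p)).mul (hwp p hp0.le)).intervalIntegrable_of_Icc hδη)
    fun x hx => by have := hx0 x (Ioc_subset_Icc_self hx); positivity
  have hM := ofReal_intervalIntegral_eq_setLIntegral
    (f := fun x => x ^ (a + 1 - p) * (|w x| ^ (p - 1) * |w' x|)) hδη
    (((hpow (a + 1 - p)).mul ((hwp (p - 1) (by linarith)).mul hw'.abs)).intervalIntegrable_of_Icc
      hδη)
    fun x hx => by have := hx0 x (Ioc_subset_Icc_self hx); positivity
  have hHolder : ∫⁻ x in Ioc δ η, ENNReal.ofReal (x ^ (a + 1 - p) * (|w x| ^ (p - 1) * |w' x|)) ≤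
      (∫⁻ x in Ioc δ η, ENNReal.ofReal (x ^ (a - p) * |w x| ^ p)) ^ (1 - p⁻¹) *
        (∫⁻ x in Ioc δ η, ENNReal.ofReal (x ^ a * |w' x| ^ p)) ^ p⁻¹ := by
    rw [setLIntegral_congr_fun measurableSet_Ioc fun x hx =>
      ofReal_rpow_mul_abs_eq_rpow_mul_rpow hp (hx0 x (Ioc_subset_Icc_self hx))]
    exact ENNReal.lintegral_mul_norm_pow_le
      ((((hpow (a - p)).mul (hwp p hp0.le)).mono Ioc_subset_Icc_self).aemeasurable
        measurableSet_Ioc).ennreal_ofReal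
      ((((hpow a).mul (hw'.abs.rpow_const fun _ _ => Or.inr hp0.le)).mono
        Ioc_subset_Icc_self).aemeasurable measurableSet_Ioc).ennreal_ofReal
      (sub_nonneg.2 (inv_le_one_of_one_le₀ hp)) (by positivity) (by ring)
  have hdiv := div_le_div_of_nonneg_right hreal hp0.le
  rw [add_div, mul_div_cancel_left₀ _ hp0.ne', mul_div_right_comm, ← abs_of_pos hp0,
    ← abs_div, abs_of_pos hp0] at hdiv
  calc ENNReal.ofReal |(a + 1 - p) / p| * ∫⁻ x in Ioc δ η, ENNReal.ofReal (x ^ (a - p) * |w x| ^ p)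
      _ = ENNReal.ofReal (|(a + 1 - p) / p| * ∫ x in δ..η, x ^ (a - p) * |w x| ^ p) := by
        rw [ENNReal.ofReal_mul (abs_nonneg _), hL]
      _ ≤ _ := (ENNReal.ofReal_le_ofReal hdiv).trans ENNReal.ofReal_add_le
      _ ≤ _ := by rw [hM]; gcongr

theorem ENNReal.mul_rpow_le_of_mul_le_add_rpow_mul {ι : Type*} {l : Filter ι} [l.NeBot]
    {E b : ι → ℝ≥0∞} {I K M : ℝ≥0∞} {q : ℝ} (hq : 0 < q) (hq1 : q ≤ 1) (hK : K ≠ ⊤)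
    (hE : Tendsto E l (𝓝 I)) (hEfin : ∀ᶠ i in l, E i ≠ ⊤) (hb : Tendsto b l (𝓝 0))
    (h : ∀ᶠ i in l, K * E i ≤ b i + E i ^ (1 - q) * M) :
    K * I ^ q ≤ M := by
  rcases eq_or_ne I 0 with rfl | hI
  · simp [ENNReal.zero_rpow_of_pos hq]
  obtain ⟨m, hm0, hmI⟩ := exists_between (pos_iff_ne_zero.2 hI)
  have hm : m ^ (1 - q) ≠ 0 := (ENNReal.rpow_pos hm0 hmI.ne_top).ne'
  refine le_of_tendsto_of_tendsto
    (ENNReal.Tendsto.const_mul ((ENNReal.continuous_rpow_const.tendsto I).comp hE) (Or.inr hK))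
    (by simpa using (ENNReal.Tendsto.div_const hb (Or.inr hm)).add_const M) ?_
  filter_upwards [h, hEfin, hE.eventually (lt_mem_nhds hmI)] with i hi hfin hmE
  have hE0 : E i ≠ 0 := (hm0.trans hmE).ne'
  have hEq0 : E i ^ (1 - q) ≠ 0 := (ENNReal.rpow_pos (hm0.trans hmE) hfin).ne'
  have hEqtop : E i ^ (1 - q) ≠ ⊤ := ENNReal.rpow_ne_top_of_nonneg (sub_nonneg.2 hq1) hfin
  calc K * E i ^ q = K * E i / E i ^ (1 - q) := by
        conv_lhs =>
          rw [show q = 1 - (1 - q) by ring, ENNReal.rpow_sub _ _ hE0 hfin, ENNReal.rpow_one]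
        rw [mul_div_assoc]
    _ ≤ (b i + E i ^ (1 - q) * M) / E i ^ (1 - q) := ENNReal.div_le_div_right hi _
    _ = b i / E i ^ (1 - q) + M := by
        rw [ENNReal.add_div, mul_comm, ENNReal.mul_div_cancel_right hEq0 hEqtop]
    _ ≤ b i / m ^ (1 - q) + M := by gcongr

theorem tendsto_setLIntegral_Ioc_nhdsGT_prod_nhdsLT {A B : ℝ} {f : ℝ → ℝ≥0∞}
    (hf : AEMeasurable f (volume.restrict (Ioo A B))) :
    Tendsto (fun i : ℝ × ℝ => ∫⁻ x in Ioc i.1 i.2, f x) (𝓝[>] A ×ˢ 𝓝[<] B)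
      (𝓝 (∫⁻ x in Ioo A B, f x)) := by
  refine ((aecover_Ioo_of_Ioc (tendsto_nhdsWithin_iff.1 tendsto_fst).1
    (tendsto_nhdsWithin_iff.1 tendsto_snd).1).lintegral_tendsto_of_countably_generated
      hf).congr' ?_
  filter_upwards [prod_mem_prod self_mem_nhdsWithin self_mem_nhdsWithin] with i ⟨hA, hB⟩
  have hsub : Ioc i.1 i.2 ⊆ Ioo A B := fun x hx => ⟨lt_trans hA hx.1, hx.2.trans_lt hB⟩
  rw [Measure.restrict_restrict measurableSet_Ioc, inter_eq_left.2 hsub]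

theorem eventually_Icc_subset_Ioo_nhdsGT_prod_nhdsLT {A B : ℝ} (hAB : A < B) :
    ∀ᶠ i : ℝ × ℝ in 𝓝[>] A ×ˢ 𝓝[<] B, A < i.1 ∧ i.1 ≤ i.2 ∧ Icc i.1 i.2 ⊆ Ioo A B := by
  filter_upwards [prod_mem_prod (Ioo_mem_nhdsGT (left_lt_add_div_two.2 hAB))
    (Ioo_mem_nhdsLT (add_div_two_lt_right.2 hAB))] with i hi
  exact ⟨hi.1.1, hi.1.2.le.trans hi.2.1.le, Icc_subset_Ioo hi.1.1 hi.2.2⟩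

theorem tendsto_rpow_mul_abs_rpow_nhdsLT {c p R : ℝ} {w : ℝ → ℝ} (hp : 0 < p) (hR : 0 < R)
    (hw : Tendsto w (𝓝[<] R) (𝓝 0)) :
    Tendsto (fun r => r ^ c * |w r| ^ p) (𝓝[<] R) (𝓝 0) := by
  simpa [Real.zero_rpow hp.ne'] using
    ((Real.continuousAt_rpow_const R c (Or.inl hR.ne')).tendsto.mono_left
      nhdsWithin_le_nhds).mul (hw.abs.rpow_const (Or.inr hp.le))

theorem stmt_3 (a p R : ℝ) (hp : 1 ≤ p) (hR : 0 < R) (w : ℝ → ℝ)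
    (hw : ContDiffOn ℝ 1 w (Ioo 0 R))
    (h0 : Tendsto (fun r : ℝ => r ^ (a + 1 - p) * |w r| ^ p) (nhdsWithin 0 (Ioi 0)) (nhds 0))
    (hRlim : Tendsto w (nhdsWithin R (Iio R)) (nhds 0)) :
    ENNReal.ofReal (|(a + 1 - p) / p| ^ p) *
        ∫⁻ r in Ioo (0:ℝ) R, ENNReal.ofReal (r ^ (a - p) * |w r| ^ p) ≤
      ∫⁻ r in Ioo (0:ℝ) R, ENNReal.ofReal (r ^ a * |deriv w r| ^ p) := by
  have hp0 : 0 < p := by linarith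
  have hw' : ContinuousOn (deriv w) (Ioo 0 R) := hw.continuousOn_deriv_of_isOpen isOpen_Ioo le_rfl
  have hder : ∀ x ∈ Ioo 0 R, HasDerivAt w (deriv w x) x := fun x hx =>
    ((hw.differentiableOn one_ne_zero).differentiableAt (isOpen_Ioo.mem_nhds hx)).hasDerivAt
  have hf : ContinuousOn (fun x => x ^ (a - p) * |w x| ^ p) (Ioo 0 R) :=
    (continuousOn_id.rpow_const fun x hx => Or.inl hx.1.ne').mul
      (hw.continuousOn.abs.rpow_const fun _ _ => Or.inr hp0.le)
  have hl := eventually_Icc_subset_Ioo_nhdsGT_prod_nhdsLT hR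
  set I := ∫⁻ r in Ioo (0:ℝ) R, ENNReal.ofReal (r ^ (a - p) * |w r| ^ p)
  set J := ∫⁻ r in Ioo (0:ℝ) R, ENNReal.ofReal (r ^ a * |deriv w r| ^ p)
  have hE := tendsto_setLIntegral_Ioc_nhdsGT_prod_nhdsLT
    (hf.aemeasurable measurableSet_Ioo).ennreal_ofReal
  have hEfin : ∀ᶠ i in 𝓝[>] 0 ×ˢ 𝓝[<] R,
      ∫⁻ x in Ioc i.1 i.2, ENNReal.ofReal (x ^ (a - p) * |w x| ^ p) ≠ ⊤ := by
    filter_upwards [hl] with i hi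
    exact ((hf.mono hi.2.2).integrableOn_Icc.mono_set Ioc_subset_Icc_self).setLIntegral_lt_top.ne
  have hb : Tendsto (fun i : ℝ × ℝ => ENNReal.ofReal
      ((i.1 ^ (a + 1 - p) * |w i.1| ^ p + i.2 ^ (a + 1 - p) * |w i.2| ^ p) / p))
      (𝓝[>] 0 ×ˢ 𝓝[<] R) (𝓝 0) := by
    simpa using ENNReal.tendsto_ofReal (((h0.comp tendsto_fst).add
      ((tendsto_rpow_mul_abs_rpow_nhdsLT hp0 hR hRlim).comp tendsto_snd)).div_const p)
  have key : ENNReal.ofReal |(a + 1 - p) / p| * I ^ p⁻¹ ≤ J ^ p⁻¹ := by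
    refine ENNReal.mul_rpow_le_of_mul_le_add_rpow_mul (inv_pos.2 hp0) (inv_le_one_of_one_le₀ hp)
      ENNReal.ofReal_ne_top hE hEfin hb ?_
    filter_upwards [hl] with i ⟨hδ, hδη, hsub⟩
    refine (ofReal_mul_setLIntegral_Ioc_le hp hδ hδη (fun x hx => hder x (hsub hx))
      (hw'.mono hsub)).trans ?_
    gcongr _ + _ * ?_ ^ _
    exact lintegral_mono_set (Ioc_subset_Icc_self.trans hsub)
  calc ENNReal.ofReal (|(a + 1 - p) / p| ^ p) * I
      = (ENNReal.ofReal |(a + 1 - p) / p| * I ^ p⁻¹) ^ p := by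
        rw [ENNReal.mul_rpow_of_nonneg _ _ hp0.le, ENNReal.rpow_inv_rpow hp0.ne',
          ENNReal.ofReal_rpow_of_nonneg (abs_nonneg _) hp0.le]
    _ ≤ (J ^ p⁻¹) ^ p := ENNReal.rpow_le_rpow key hp0.le
    _ = J := ENNReal.rpow_inv_rpow hp0.ne' J
end

section
/- Let γ > 0, b < -1 with a + 1 + (b+1)γ = 0, p ≥ 1, C ≠ 0, and set w(r) = C·(r^{-γ} − 1)^{-(b+1)/p} on (0,1). Then ∫₀¹ r^{a+p}(1 − r^γ)^{b+p}|w'(r)|^p dr = (((b+1)/p)γ)^p · ∫₀¹ r^a (1 − r^γ)^b |w(r)|^p dr, and both integrals are infinite. -/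
/-!
With `β = -(b+1)/p > 0` the function is `w = C g^β` for `g r = r^(-γ) - 1 = r^(-γ) (1 - r^γ)`.
The balance condition `a + 1 + (b+1)γ = 0` makes both weighted integrands collapse to constant
multiples of `r⁻¹ (1 - r^γ)⁻¹`, namely `|C|^p` and `(βγ)^p |C|^p`. This density dominates
`r⁻¹`, which is not integrable at `0`, so both integrals are `∞` and the identity holds in
`[0, ∞]`.
-/

open MeasureTheory Set Filter

lemma lintegral_ofReal_const_mul_eq_top {α : Type*} [MeasurableSpace α] {μ : Measure α}
    {c : ℝ} (hc : 0 < c) {f : α → ℝ} (hf : ∫⁻ x, ENNReal.ofReal (f x) ∂μ = ⊤) :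
    ∫⁻ x, ENNReal.ofReal (c * f x) ∂μ = ⊤ := by
  simp_rw [ENNReal.ofReal_mul hc.le]
  rw [lintegral_const_mul' _ _ ENNReal.ofReal_ne_top, hf,
    ENNReal.mul_top (ENNReal.ofReal_pos.mpr hc).ne']

lemma lintegral_Ioo_zero_one_ofReal_inv :
    ∫⁻ r in Ioo (0:ℝ) 1, ENNReal.ofReal r⁻¹ = ⊤ := by
  by_contra h
  have hnonneg : 0 ≤ᵐ[volume.restrict (Ioo (0:ℝ) 1)] fun r : ℝ => r⁻¹ := by
    filter_upwards [ae_restrict_mem measurableSet_Ioo] with r hr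
    exact inv_nonneg.mpr hr.1.le
  have hint : IntegrableOn (fun r : ℝ => r⁻¹) (Ioo 0 1) :=
    (lintegral_ofReal_ne_top_iff_integrable measurable_inv.aestronglyMeasurable hnonneg).mp h
  rw [← intervalIntegrable_iff_integrableOn_Ioo_of_le zero_le_one] at hint
  simp at hint

section UnitInterval

variable {γ r : ℝ}

lemma one_sub_rpow_pos (hγ : 0 < γ) (hr : r ∈ Ioo (0:ℝ) 1) : 0 < 1 - r ^ γ :=
  sub_pos.mpr (Real.rpow_lt_one hr.1.le hr.2 hγ)

lemma inv_le_inv_mul_inv_one_sub_rpow (hγ : 0 < γ) (hr : r ∈ Ioo (0:ℝ) 1) :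
    r⁻¹ ≤ r⁻¹ * (1 - r ^ γ)⁻¹ := by
  have h1 : 1 ≤ (1 - r ^ γ)⁻¹ :=
    one_le_inv₀ (one_sub_rpow_pos hγ hr) |>.mpr (by linarith [Real.rpow_pos_of_pos hr.1 γ])
  simpa using mul_le_mul_of_nonneg_left h1 (inv_nonneg.mpr hr.1.le)

lemma lintegral_Ioo_zero_one_ofReal_inv_mul_inv_one_sub_rpow (hγ : 0 < γ) :
    ∫⁻ r in Ioo (0:ℝ) 1, ENNReal.ofReal (r⁻¹ * (1 - r ^ γ)⁻¹) = ⊤ := by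
  rw [eq_top_iff, ← lintegral_Ioo_zero_one_ofReal_inv]
  exact setLIntegral_mono' measurableSet_Ioo fun r hr =>
    ENNReal.ofReal_le_ofReal (inv_le_inv_mul_inv_one_sub_rpow hγ hr)

lemma rpow_neg_sub_one_pos (hγ : 0 < γ) (hr : r ∈ Ioo (0:ℝ) 1) : 0 < r ^ (-γ) - 1 := by
  rw [Real.rpow_neg hr.1.le, sub_pos]
  exact one_lt_inv₀ (Real.rpow_pos_of_pos hr.1 γ) |>.mpr (Real.rpow_lt_one hr.1.le hr.2 hγ)

lemma rpow_neg_sub_one_rpow (hγ : 0 < γ) (hr : r ∈ Ioo (0:ℝ) 1) (e : ℝ) :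
    (r ^ (-γ) - 1) ^ e = r ^ (-γ * e) * (1 - r ^ γ) ^ e := by
  have hfactor : r ^ (-γ) - 1 = r ^ (-γ) * (1 - r ^ γ) := by
    rw [mul_sub, mul_one, ← Real.rpow_add hr.1]
    norm_num
  rw [hfactor, Real.mul_rpow (Real.rpow_pos_of_pos hr.1 _).le (one_sub_rpow_pos hγ hr).le,
    ← Real.rpow_mul hr.1.le]

end UnitInterval

section Extremal

variable {a b p β γ r : ℝ}

lemma hasDerivAt_const_mul_rpow_neg_sub_one_rpow (hγ : 0 < γ) (hr : r ∈ Ioo (0:ℝ) 1)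
    (C β : ℝ) :
    HasDerivAt (fun x => C * (x ^ (-γ) - 1) ^ β)
      (-(C * β * γ * r ^ (-γ - 1) * (r ^ (-γ) - 1) ^ (β - 1))) r :=
  ((((Real.hasDerivAt_rpow_const (Or.inl hr.1.ne')).sub_const 1).rpow_const
    (Or.inl (rpow_neg_sub_one_pos hγ hr).ne')).const_mul C).congr_deriv (by ring)

lemma weight_mul_abs_const_mul_rpow_neg_sub_one_rpow (hγ : 0 < γ) (hr : r ∈ Ioo (0:ℝ) 1)
    (hab : a + 1 + (b + 1) * γ = 0) (hβp : β * p = -(b + 1)) (C : ℝ) :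
    r ^ a * (1 - r ^ γ) ^ b * |C * (r ^ (-γ) - 1) ^ β| ^ p =
      |C| ^ p * (r⁻¹ * (1 - r ^ γ)⁻¹) := by
  have hg := rpow_neg_sub_one_pos hγ hr
  rw [abs_mul, abs_of_pos (Real.rpow_pos_of_pos hg β),
    Real.mul_rpow (abs_nonneg C) (Real.rpow_pos_of_pos hg β).le, ← Real.rpow_mul hg.le, hβp,
    rpow_neg_sub_one_rpow hγ hr]
  calc _ = |C| ^ p * (r ^ a * r ^ (-γ * -(b + 1)) *
          ((1 - r ^ γ) ^ b * (1 - r ^ γ) ^ (-(b + 1)))) := by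
        ring
    _ = |C| ^ p * (r ^ (-1:ℝ) * (1 - r ^ γ) ^ (-1:ℝ)) := by
        rw [← Real.rpow_add hr.1, ← Real.rpow_add (one_sub_rpow_pos hγ hr)]
        congr 3
        · linear_combination hab
        · ring
    _ = |C| ^ p * (r⁻¹ * (1 - r ^ γ)⁻¹) := by simp only [Real.rpow_neg_one]

lemma weight_mul_abs_deriv_const_mul_rpow_neg_sub_one_rpow (hγ : 0 < γ) (hr : r ∈ Ioo (0:ℝ) 1)
    (hab : a + 1 + (b + 1) * γ = 0) (hβp : β * p = -(b + 1)) (C : ℝ) :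
    r ^ (a + p) * (1 - r ^ γ) ^ (b + p) *
        |C * β * γ * r ^ (-γ - 1) * (r ^ (-γ) - 1) ^ (β - 1)| ^ p =
      |C * β * γ| ^ p * (r⁻¹ * (1 - r ^ γ)⁻¹) := by
  have hg := rpow_neg_sub_one_pos hγ hr
  have hr' := Real.rpow_pos_of_pos hr.1 (-γ - 1)
  have hg' := Real.rpow_pos_of_pos hg (β - 1)
  rw [abs_mul, abs_mul, abs_of_pos hr', abs_of_pos hg',
    Real.mul_rpow (mul_nonneg (abs_nonneg _) hr'.le) hg'.le,
    Real.mul_rpow (abs_nonneg _) hr'.le, ← Real.rpow_mul hr.1.le, ← Real.rpow_mul hg.le,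
    rpow_neg_sub_one_rpow hγ hr]
  calc _ = |C * β * γ| ^ p * (r ^ (a + p) * r ^ ((-γ - 1) * p) * r ^ (-γ * ((β - 1) * p)) *
          ((1 - r ^ γ) ^ (b + p) * (1 - r ^ γ) ^ ((β - 1) * p))) := by
        ring
    _ = |C * β * γ| ^ p * (r ^ (-1:ℝ) * (1 - r ^ γ) ^ (-1:ℝ)) := by
        rw [← Real.rpow_add hr.1, ← Real.rpow_add hr.1,
          ← Real.rpow_add (one_sub_rpow_pos hγ hr)]
        congr 3
        · linear_combination hab - γ * hβp
        · linear_combination hβp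
    _ = |C * β * γ| ^ p * (r⁻¹ * (1 - r ^ γ)⁻¹) := by simp only [Real.rpow_neg_one]

end Extremal

theorem stmt_5 (a b p γ C : ℝ) (hγ : 0 < γ) (hb : b < -1)
    (hab : a + 1 + (b + 1) * γ = 0) (hp : 1 ≤ p) (hC : C ≠ 0)
    (w : ℝ → ℝ) (hw : ∀ r ∈ Ioo (0:ℝ) 1, w r = C * (r ^ (-γ) - 1) ^ (-(b + 1) / p)) :
    (∫⁻ r in Ioo (0:ℝ) 1,
        ENNReal.ofReal (r ^ (a + p) * (1 - r ^ γ) ^ (b + p) * |deriv w r| ^ p)) =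
      ENNReal.ofReal ((-((b + 1) / p) * γ) ^ p) *
        ∫⁻ r in Ioo (0:ℝ) 1, ENNReal.ofReal (r ^ a * (1 - r ^ γ) ^ b * |w r| ^ p) ∧
    (∫⁻ r in Ioo (0:ℝ) 1,
        ENNReal.ofReal (r ^ (a + p) * (1 - r ^ γ) ^ (b + p) * |deriv w r| ^ p)) = ⊤ ∧
    (∫⁻ r in Ioo (0:ℝ) 1, ENNReal.ofReal (r ^ a * (1 - r ^ γ) ^ b * |w r| ^ p)) = ⊤ := by
  have hp0 : 0 < p := by linarith
  set β := -(b + 1) / p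
  have hβ0 : 0 < β := div_pos (by linarith) hp0
  have hβp : β * p = -(b + 1) := div_mul_cancel₀ _ hp0.ne'
  have hβγ : -((b + 1) / p) * γ = β * γ := by ring
  have hderiv : ∀ r ∈ Ioo (0:ℝ) 1,
      deriv w r = -(C * β * γ * r ^ (-γ - 1) * (r ^ (-γ) - 1) ^ (β - 1)) := fun r hr =>
    ((hasDerivAt_const_mul_rpow_neg_sub_one_rpow hγ hr C β).congr_of_eventuallyEq
      (eventually_of_mem (isOpen_Ioo.mem_nhds hr) hw)).deriv
  have hL1 : (∫⁻ r in Ioo (0:ℝ) 1,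
      ENNReal.ofReal (r ^ (a + p) * (1 - r ^ γ) ^ (b + p) * |deriv w r| ^ p)) = ⊤ := by
    rw [setLIntegral_congr_fun measurableSet_Ioo fun r hr => by
      rw [hderiv r hr, abs_neg,
        weight_mul_abs_deriv_const_mul_rpow_neg_sub_one_rpow hγ hr hab hβp]]
    exact lintegral_ofReal_const_mul_eq_top
      (Real.rpow_pos_of_pos (abs_pos.mpr (by positivity)) p)
      (lintegral_Ioo_zero_one_ofReal_inv_mul_inv_one_sub_rpow hγ)
  have hL2 :
      (∫⁻ r in Ioo (0:ℝ) 1, ENNReal.ofReal (r ^ a * (1 - r ^ γ) ^ b * |w r| ^ p)) = ⊤ := by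
    rw [setLIntegral_congr_fun measurableSet_Ioo fun r hr => by
      rw [hw r hr, weight_mul_abs_const_mul_rpow_neg_sub_one_rpow hγ hr hab hβp]]
    exact lintegral_ofReal_const_mul_eq_top
      (Real.rpow_pos_of_pos (abs_pos.mpr (by positivity)) p)
      (lintegral_Ioo_zero_one_ofReal_inv_mul_inv_one_sub_rpow hγ)
  refine ⟨?_, hL1, hL2⟩
  rw [hL1, hL2, hβγ, ENNReal.mul_top]
  exact (ENNReal.ofReal_pos.mpr (by positivity)).ne'
end

section
/- Let γ > 0, N ≥ 2, β > 1. The function w(x) = (1 − |x|^γ)^{(β−1)/p}·f(x/|x|) on the unit ball B_1 ⊂ ℝ^N, for any bounded measurable f not a.e. zero on S^{N−1}, satisfies ∫_{B_1} |∇w · x/|x||^p / (|x|^{N−γ+(γ−1)p}(1−|x|^γ)^{β−p}) dx = +∞. -/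
/-!
In polar coordinates `x = r θ` the integrand factors as `C |f θ|^p · r^(γ-N) (1 - r^γ)⁻¹` with
`C = ((β - 1) γ / p)^p`, so the integral is the product of `∫ |f|^p` over the sphere, which is
positive because `f` is not a.e. zero, and of `∫₀¹ r^(N-1) r^(γ-N) (1 - r^γ)⁻¹ dr`, which
diverges like `∫ (1 - r)⁻¹ dr` at `r = 1` since `1 - r^γ ≤ max 1 γ · (1 - r)`.
-/

open MeasureTheory Metric Set
open scoped ENNReal

theorem one_sub_rpow_le_max_mul_one_sub {γ r : ℝ} (hr0 : 0 < r) (hr1 : r ≤ 1) :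
    1 - r ^ γ ≤ max 1 γ * (1 - r) := by
  rcases le_total γ 1 with h | h
  · have h2 : r ^ (1 : ℝ) ≤ r ^ γ := Real.rpow_le_rpow_of_exponent_ge hr0 hr1 h
    rw [Real.rpow_one] at h2
    nlinarith [le_max_left 1 γ, sub_nonneg.2 hr1]
  · have hb := one_add_mul_self_le_rpow_one_add (s := r - 1) (by linarith) h
    rw [add_sub_cancel] at hb
    nlinarith [le_max_right 1 γ, sub_nonneg.2 hr1]

theorem half_rpow_abs_le_rpow {r : ℝ} (a : ℝ) (h1 : 1 / 2 ≤ r) (h2 : r ≤ 1) :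
    (1 / 2 : ℝ) ^ |a| ≤ r ^ a :=
  (Real.rpow_le_rpow (by norm_num) h1 (abs_nonneg a)).trans
    (Real.rpow_le_rpow_of_exponent_ge (by linarith) h2 (le_abs_self a))

theorem lintegral_Ioo_inv_one_sub_eq_top {b : ℝ} (hb : b < 1) :
    ∫⁻ r in Ioo b 1, ENNReal.ofReal (1 - r)⁻¹ = ∞ := by
  have hnot : ¬ IntegrableOn (fun r : ℝ => (1 - r)⁻¹) (Ioo b 1) := by
    intro h
    have hsub : IntervalIntegrable (fun r : ℝ => (r - 1)⁻¹) volume b 1 := by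
      rw [intervalIntegrable_iff_integrableOn_Ioc_of_le hb.le,
        integrableOn_Ioc_iff_integrableOn_Ioo]
      refine h.neg.congr_fun (fun r _ => ?_) measurableSet_Ioo
      rw [Pi.neg_apply, ← inv_neg, neg_sub]
    simp [hb.ne, Set.right_mem_uIcc] at hsub
  by_contra hne
  refine hnot ((lintegral_ofReal_ne_top_iff_integrable (by fun_prop) ?_).1 hne)
  filter_upwards [ae_restrict_mem measurableSet_Ioo] with r hr
  exact inv_nonneg.2 (sub_nonneg.2 hr.2.le)

theorem lintegral_Ioi_pow_mul_indicator_eq_top (n : ℕ) (a : ℝ) {γ : ℝ} (hγ : 0 < γ) :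
    ∫⁻ r in Ioi 0, ENNReal.ofReal (r ^ n) *
      (Iio 1).indicator (fun r => ENNReal.ofReal (r ^ a * (1 - r ^ γ)⁻¹)) r = ∞ := by
  set c : ℝ := (1 / 2) ^ n * ((1 / 2) ^ |a| * (max 1 γ)⁻¹)
  have hc : 0 < c := by positivity
  have hbound : ∀ r ∈ Ioo (1 / 2 : ℝ) 1, ENNReal.ofReal c * ENNReal.ofReal (1 - r)⁻¹ ≤
      ENNReal.ofReal (r ^ n) *
        (Iio 1).indicator (fun r => ENNReal.ofReal (r ^ a * (1 - r ^ γ)⁻¹)) r := by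
    rintro r ⟨h1, h2⟩
    have hr0 : 0 < r := by linarith
    have ht : 0 < 1 - r ^ γ := sub_pos.2 (Real.rpow_lt_one hr0.le h2 hγ)
    rw [indicator_of_mem (mem_Iio.2 h2), ← ENNReal.ofReal_mul hc.le,
      ← ENNReal.ofReal_mul (by positivity)]
    refine ENNReal.ofReal_le_ofReal ?_
    have hinv : (max 1 γ)⁻¹ * (1 - r)⁻¹ ≤ (1 - r ^ γ)⁻¹ := by
      rw [← mul_inv]
      exact inv_anti₀ ht (one_sub_rpow_le_max_mul_one_sub hr0 h2.le)
    calc c * (1 - r)⁻¹ = (1 / 2) ^ n * ((1 / 2) ^ |a| * ((max 1 γ)⁻¹ * (1 - r)⁻¹)) := by ring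
      _ ≤ r ^ n * (r ^ a * (1 - r ^ γ)⁻¹) := by
        gcongr
        exact half_rpow_abs_le_rpow a h1.le h2.le
  rw [← top_le_iff]
  calc ∞ = ENNReal.ofReal c * ∫⁻ r in Ioo (1 / 2 : ℝ) 1, ENNReal.ofReal (1 - r)⁻¹ := by
        rw [lintegral_Ioo_inv_one_sub_eq_top (by norm_num), ENNReal.mul_top (by positivity)]
    _ = ∫⁻ r in Ioo (1 / 2 : ℝ) 1, ENNReal.ofReal c * ENNReal.ofReal (1 - r)⁻¹ :=
        (lintegral_const_mul' _ _ ENNReal.ofReal_ne_top).symm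
    _ ≤ _ := setLIntegral_mono' measurableSet_Ioo hbound
    _ ≤ _ := lintegral_mono_set (Ioo_subset_Ioi_self.trans (Ioi_subset_Ioi (by norm_num)))

theorem lintegral_volumeIoiPow (n : ℕ) {H : ℝ → ℝ≥0∞} (hH : Measurable H) :
    ∫⁻ r, H r ∂(Measure.volumeIoiPow n) = ∫⁻ r in Ioi 0, ENNReal.ofReal (r ^ n) * H r := by
  rw [Measure.volumeIoiPow, lintegral_withDensity_eq_lintegral_mul _ (by fun_prop) (by fun_prop),
    ← lintegral_subtype_comap measurableSet_Ioi]
  rfl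

section Polar

variable {E : Type*} [NormedAddCommGroup E] [NormedSpace ℝ E] [MeasurableSpace E] [BorelSpace E]
  [FiniteDimensional ℝ E] (μ : Measure E) [μ.IsAddHaarMeasure]

theorem setLIntegral_compl_zero_mul_norm {F : E → ℝ≥0∞} {H : ℝ → ℝ≥0∞} (hF : Measurable F)
    (hH : Measurable H) :
    ∫⁻ x in {0}ᶜ, F (‖x‖⁻¹ • x) * H ‖x‖ ∂μ =
      (∫⁻ θ, F θ ∂μ.toSphere) *
        ∫⁻ r in Ioi 0, ENNReal.ofReal (r ^ (Module.finrank ℝ E - 1)) * H r := by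
  rw [← lintegral_subtype_comap (measurableSet_singleton 0).compl,
    ← lintegral_volumeIoiPow _ hH, ← lintegral_prod_mul (by fun_prop) (by fun_prop),
    ← (μ.measurePreserving_homeomorphUnitSphereProd).lintegral_comp_emb
      (Homeomorph.measurableEmbedding _)]
  simp only [homeomorphUnitSphereProd_apply_fst_coe, homeomorphUnitSphereProd_apply_snd_coe]

theorem lintegral_toSphere_ne_zero {F : E → ℝ≥0∞} (hF : Measurable F)
    (h : μ {x | x ∈ ball 0 1 ∧ x ≠ 0 ∧ F (‖x‖⁻¹ • x) ≠ 0} ≠ 0) :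
    ∫⁻ θ, F θ ∂μ.toSphere ≠ 0 := by
  intro hzero
  have hprod : ∫⁻ x in {0}ᶜ, F (‖x‖⁻¹ • x) * (Iio 1).indicator 1 ‖x‖ ∂μ = 0 := by
    rw [setLIntegral_compl_zero_mul_norm μ hF (measurable_one.indicator measurableSet_Iio),
      hzero, zero_mul]
  rw [lintegral_eq_zero_iff (by fun_prop (disch := exact measurableSet_Iio)), Filter.EventuallyEq,
    ae_restrict_iff' (measurableSet_singleton 0).compl] at hprod
  refine h (measure_mono_null ?_ (ae_iff.1 hprod))
  rintro x ⟨hx1, hx0, hFx⟩ hzx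
  simpa [indicator_of_mem (mem_Iio.2 (mem_ball_zero_iff.1 hx1)), hFx] using hzx hx0

end Polar

theorem deriv_comp_smul_of_eq_on_ball {E : Type*} [NormedAddCommGroup E] [NormedSpace ℝ E]
    {q γ : ℝ} {f w : E → ℝ}
    (hw : ∀ x ∈ ball (0 : E) 1, x ≠ 0 → w x = (1 - ‖x‖ ^ γ) ^ q * f (‖x‖⁻¹ • x))
    {θ : E} (hθ : ‖θ‖ = 1) {r : ℝ} (hr0 : 0 < r) (hr1 : r < 1) (hγ : 0 < γ) :
    deriv (fun s : ℝ => w (s • θ)) r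
      = q * (1 - r ^ γ) ^ (q - 1) * -(γ * r ^ (γ - 1)) * f θ := by
  have hθ0 : θ ≠ 0 := by rintro rfl; simp at hθ
  have hray : (fun s : ℝ => w (s • θ)) =ᶠ[nhds r] fun s => (1 - s ^ γ) ^ q * f θ := by
    filter_upwards [Ioo_mem_nhds hr0 hr1] with s ⟨hs0, hs1⟩
    have hn : ‖s • θ‖ = s := by rw [norm_smul, hθ, mul_one, Real.norm_of_nonneg hs0.le]
    rw [hw _ (by rwa [mem_ball_zero_iff, hn]) (smul_ne_zero hs0.ne' hθ0), hn,
      inv_smul_smul₀ hs0.ne']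
  have hpos : 0 < 1 - r ^ γ := sub_pos.2 (Real.rpow_lt_one hr0.le hr1 hγ)
  have hinner : HasDerivAt (fun s : ℝ => 1 - s ^ γ) (-(γ * r ^ (γ - 1))) r := by
    simpa using (Real.hasDerivAt_rpow_const (p := γ) (Or.inl hr0.ne')).const_sub 1
  rw [hray.deriv_eq, ((hinner.rpow_const (Or.inl hpos.ne')).mul_const (f θ)).deriv]
  ring

theorem abs_rpow_div_weight_eq {p β γ a r t : ℝ} (g : ℝ) (hβ : 1 < β) (hγ : 0 < γ) (hp : 0 < p)
    (hr : 0 < r) (ht : 0 < t) :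
    |(β - 1) / p * t ^ ((β - 1) / p - 1) * -(γ * r ^ (γ - 1)) * g| ^ p /
      (r ^ (a - γ + (γ - 1) * p) * t ^ (β - p))
    = ((β - 1) / p * γ) ^ p * |g| ^ p * (r ^ (γ - a) * t⁻¹) := by
  have hq : 0 < (β - 1) / p := div_pos (by linarith) hp
  have habs : |(β - 1) / p * t ^ ((β - 1) / p - 1) * -(γ * r ^ (γ - 1)) * g|
      = (β - 1) / p * γ * (t ^ ((β - 1) / p - 1) * r ^ (γ - 1)) * |g| := by
    rw [abs_mul, mul_neg, abs_neg, abs_of_pos (by positivity)]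
    ring
  have hexp : ((β - 1) / p - 1) * p = β - p - 1 := by field_simp; ring
  rw [habs, Real.mul_rpow (by positivity) (abs_nonneg g),
    Real.mul_rpow (by positivity) (by positivity), Real.mul_rpow (by positivity) (by positivity),
    Real.mul_rpow (by positivity) (by positivity),
    ← Real.rpow_mul ht.le, ← Real.rpow_mul hr.le, hexp,
    show γ - a = (γ - 1) * p - (a - γ + (γ - 1) * p) by ring, Real.rpow_sub hr,
    Real.rpow_sub ht, Real.rpow_one]
  have : t ^ (β - p) ≠ 0 := (Real.rpow_pos_of_pos ht _).ne'
  have : r ^ (a - γ + (γ - 1) * p) ≠ 0 := (Real.rpow_pos_of_pos hr _).ne'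
  field_simp

theorem ofReal_hardy_integrand_eq_mul {E : Type*} [NormedAddCommGroup E] [NormedSpace ℝ E]
    {p β γ : ℝ} {f w : E → ℝ}
    (hw : ∀ x ∈ ball (0 : E) 1, x ≠ 0 → w x = (1 - ‖x‖ ^ γ) ^ ((β - 1) / p) * f (‖x‖⁻¹ • x))
    (hγ : 0 < γ) (hβ : 1 < β) (hp : 0 < p) (a : ℝ) {x : E} (hx : x ∈ ball (0 : E) 1)
    (hx0 : x ≠ 0) :
    ENNReal.ofReal (|deriv (fun s : ℝ => w (s • (‖x‖⁻¹ • x))) ‖x‖| ^ p /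
        (‖x‖ ^ (a - γ + (γ - 1) * p) * (1 - ‖x‖ ^ γ) ^ (β - p))) =
      ENNReal.ofReal (((β - 1) / p * γ) ^ p * |f (‖x‖⁻¹ • x)| ^ p) *
        ENNReal.ofReal (‖x‖ ^ (γ - a) * (1 - ‖x‖ ^ γ)⁻¹) := by
  have hr0 : 0 < ‖x‖ := norm_pos_iff.2 hx0
  have hr1 : ‖x‖ < 1 := mem_ball_zero_iff.1 hx
  have ht : 0 < 1 - ‖x‖ ^ γ := sub_pos.2 (Real.rpow_lt_one hr0.le hr1 hγ)
  have hθ : ‖‖x‖⁻¹ • x‖ = 1 := by rw [norm_smul, norm_inv, norm_norm, inv_mul_cancel₀ hr0.ne']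
  rw [deriv_comp_smul_of_eq_on_ball hw hθ hr0 hr1 hγ,
    abs_rpow_div_weight_eq _ hβ hγ hp hr0 ht, ENNReal.ofReal_mul (by positivity)]

theorem stmt_14_general (N : ℕ) (p β γ : ℝ) (hγ : 0 < γ) (hβ : 1 < β) (hp : 1 ≤ p)
    (f : EuclideanSpace ℝ (Fin N) → ℝ) (hf : Measurable f)
    (hne : 0 < volume {x : EuclideanSpace ℝ (Fin N) |
      x ∈ ball (0 : EuclideanSpace ℝ (Fin N)) 1 ∧ x ≠ 0 ∧ f (‖x‖⁻¹ • x) ≠ 0})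
    (w : EuclideanSpace ℝ (Fin N) → ℝ)
    (hw : ∀ x ∈ ball (0 : EuclideanSpace ℝ (Fin N)) 1, x ≠ 0 →
      w x = (1 - ‖x‖ ^ γ) ^ ((β - 1) / p) * f (‖x‖⁻¹ • x)) :
    (∫⁻ x in ball (0 : EuclideanSpace ℝ (Fin N)) 1,
        ENNReal.ofReal (|deriv (fun s : ℝ => w (s • (‖x‖⁻¹ • x))) ‖x‖| ^ p /
          (‖x‖ ^ ((N : ℝ) - γ + (γ - 1) * p) * (1 - ‖x‖ ^ γ) ^ (β - p)))) = ⊤ := by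
  have hp0 : 0 < p := zero_lt_one.trans_le hp
  have hC : 0 < ((β - 1) / p * γ) ^ p := by
    have : 0 < (β - 1) / p := div_pos (by linarith) hp0
    positivity
  set F : EuclideanSpace ℝ (Fin N) → ℝ≥0∞ :=
    fun θ => ENNReal.ofReal (((β - 1) / p * γ) ^ p * |f θ| ^ p)
  set H : ℝ → ℝ≥0∞ :=
    (Iio 1).indicator fun r => ENNReal.ofReal (r ^ (γ - N) * (1 - r ^ γ)⁻¹) with hH_def
  have hF : Measurable F := by fun_prop
  have hH : Measurable H := by fun_prop (disch := exact measurableSet_Iio)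
  have hsphere : ∫⁻ θ, F ↑θ ∂(volume : Measure (EuclideanSpace ℝ (Fin N))).toSphere ≠ 0 := by
    refine lintegral_toSphere_ne_zero volume hF (hne.trans_eq (congrArg volume ?_)).ne'
    ext x
    simp only [F, mem_ofPred_eq, ne_eq, ENNReal.ofReal_eq_zero, not_le,
      mul_pos_iff_of_pos_left hC, (Real.rpow_nonneg (abs_nonneg _) p).lt_iff_ne',
      Real.rpow_eq_zero (abs_nonneg _) hp0.ne', abs_eq_zero]
  rw [← top_le_iff, ← lintegral_indicator measurableSet_ball]
  calc ⊤ = ∫⁻ x in {0}ᶜ, F (‖x‖⁻¹ • x) * H ‖x‖ := by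
        rw [setLIntegral_compl_zero_mul_norm volume hF hH,
          lintegral_Ioi_pow_mul_indicator_eq_top _ _ hγ, ENNReal.mul_top hsphere]
    _ ≤ ∫⁻ x in {0}ᶜ, (ball 0 1).indicator _ x :=
        setLIntegral_mono' (measurableSet_singleton 0).compl fun x hx0 => ?_
    _ ≤ _ := setLIntegral_le_lintegral _ _
  by_cases hx : x ∈ ball 0 1
  · rw [indicator_of_mem hx, ofReal_hardy_integrand_eq_mul hw hγ hβ hp0 _ hx hx0, hH_def,
      indicator_of_mem (mem_Iio.2 (mem_ball_zero_iff.1 hx))]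
  · rw [hH_def, indicator_of_notMem (by simpa using hx), mul_zero]
    exact zero_le

theorem stmt_14 (N : ℕ) (hN : 2 ≤ N) (p β γ : ℝ) (hγ : 0 < γ) (hβ : 1 < β) (hp : 1 ≤ p)
    (f : EuclideanSpace ℝ (Fin N) → ℝ) (hf : Measurable f) (M : ℝ)
    (hbd : ∀ x, |f x| ≤ M)
    (hne : 0 < volume {x : EuclideanSpace ℝ (Fin N) |
      x ∈ ball (0 : EuclideanSpace ℝ (Fin N)) 1 ∧ x ≠ 0 ∧ f (‖x‖⁻¹ • x) ≠ 0})
    (w : EuclideanSpace ℝ (Fin N) → ℝ)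
    (hw : ∀ x ∈ ball (0 : EuclideanSpace ℝ (Fin N)) 1, x ≠ 0 →
      w x = (1 - ‖x‖ ^ γ) ^ ((β - 1) / p) * f (‖x‖⁻¹ • x)) :
    (∫⁻ x in ball (0 : EuclideanSpace ℝ (Fin N)) 1,
        ENNReal.ofReal (|deriv (fun s : ℝ => w (s • (‖x‖⁻¹ • x))) ‖x‖| ^ p /
          (‖x‖ ^ ((N : ℝ) - γ + (γ - 1) * p) * (1 - ‖x‖ ^ γ) ^ (β - p)))) = ⊤ :=
  stmt_14_general N p β γ hγ hβ hp f hf hne w hw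
end

section
/- For γ > 0, A ∈ ℝ, and k ∈ ℕ with k ≥ 1, the function F(x) = (1 − |x|^γ)^A on B_1 ∖ {0} ⊂ ℝ^N satisfies: its k-th iterated gradient/Laplacian ∇^k F (equal to Δ^m F if k = 2m, and ∇Δ^m F if k = 2m+1) can be written as Σ_{j=1}^k C_{k,j}·|x|^{jγ−k}(1−|x|^γ)^{A−j} (times x/|x| when k is odd), where the leading coefficient is C_{k,k} = (−γ)^k·∏_{ℓ=1}^k (A − ℓ + 1). -/
open Metric

/-- The Laplacian of a function on Euclidean space, as the trace of the second derivative. -/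
noncomputable def eLaplacian (N : ℕ) (u : EuclideanSpace ℝ (Fin N) → ℝ)
    (x : EuclideanSpace ℝ (Fin N)) : ℝ :=
  ∑ i : Fin N, iteratedFDeriv ℝ 2 u x ![EuclideanSpace.single i 1, EuclideanSpace.single i 1]

/-- Iterated Laplacian `Δ^m`. -/
noncomputable def iterLaplacian (N : ℕ) : ℕ → (EuclideanSpace ℝ (Fin N) → ℝ) →
    (EuclideanSpace ℝ (Fin N) → ℝ)
  | 0, u => u
  | m + 1, u => eLaplacian N (iterLaplacian N m u)
/-!
`F(x) = (1 - |x|^γ)^A` is radial, and for a radial function `u = g(|x|)` one has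
`∇u = g'(r) x / r` and `Δu = g'' + (N - 1) g' / r`. Both `d/dr` and division by `r` map the span
of `r^(jγ - k) (1 - r^γ)^(A - j)`, `j ≤ k`, into the corresponding span for `k + 1`, so `∇^k F`
is a radial profile of this shape. The new top term `j = k + 1` only arises by differentiating
the factor `(1 - r^γ)^(A - k)`, which multiplies the top coefficient by `-γ (A - k)`.
-/

open Real Filter Topology Finset

theorem norm_mem_Ioo_of_mem_ball_sdiff {E : Type*} [NormedAddCommGroup E] {x : E}
    (hx : x ∈ ball (0 : E) 1 \ {0}) : ‖x‖ ∈ Set.Ioo 0 1 :=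
  ⟨norm_pos_iff.2 hx.2, mem_ball_zero_iff.1 hx.1⟩

section Radial

variable {E : Type*} [NormedAddCommGroup E] [InnerProductSpace ℝ E]

theorem hasFDerivAt_norm_of_ne_zero {x : E} (hx : x ≠ 0) :
    HasFDerivAt (‖·‖) (‖x‖⁻¹ • innerSL ℝ x) x := by
  have hsqrt := (hasDerivAt_sqrt (pow_pos (norm_pos_iff.2 hx) 2).ne').comp_hasFDerivAt x
    (hasStrictFDerivAt_norm_sq x).hasFDerivAt
  have hnorm : (‖·‖) = sqrt ∘ fun y : E => ‖y‖ ^ 2 := by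
    ext y
    simp only [Function.comp_apply, sqrt_sq (norm_nonneg y)]
  rw [hnorm]
  refine hsqrt.congr_fderiv ?_
  ext v
  simp only [sqrt_sq (norm_nonneg x), one_div, mul_inv_rev, smul_apply, coe_innerSL_apply,
    nsmul_eq_mul, Nat.cast_ofNat, smul_eq_mul]
  ring

theorem HasDerivAt.hasFDerivAt_comp_norm {g : ℝ → ℝ} {g' : ℝ} {x : E} (hg : HasDerivAt g g' ‖x‖)
    (hx : x ≠ 0) : HasFDerivAt (fun y : E => g ‖y‖) ((g' / ‖x‖) • innerSL ℝ x) x :=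
  (hg.comp_hasFDerivAt x (hasFDerivAt_norm_of_ne_zero hx)).congr_fderiv
    (by rw [smul_smul, div_eq_mul_inv])

theorem HasDerivAt.hasGradientAt_comp_norm [CompleteSpace E] {g : ℝ → ℝ} {g' : ℝ} {x : E}
    (hg : HasDerivAt g g' ‖x‖) (hx : x ≠ 0) :
    HasGradientAt (fun y : E => g ‖y‖) (g' • (‖x‖⁻¹ • x)) x := by
  rw [hasGradientAt_iff_hasFDerivAt]
  refine (hg.hasFDerivAt_comp_norm hx).congr_fderiv ?_
  ext v
  simp [div_eq_mul_inv, mul_assoc]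

theorem iteratedFDeriv_two_comp_norm_apply {g g₁ : ℝ → ℝ} {g₂ : ℝ} {x : E} (hx : x ≠ 0)
    (hg : ∀ᶠ r in 𝓝 ‖x‖, HasDerivAt g (g₁ r) r) (hg₁ : HasDerivAt g₁ g₂ ‖x‖) (e : E) :
    iteratedFDeriv ℝ 2 (fun y => g ‖y‖) x ![e, e] =
      (g₂ - g₁ ‖x‖ / ‖x‖) / ‖x‖ ^ 2 * inner ℝ x e ^ 2 + g₁ ‖x‖ / ‖x‖ * ‖e‖ ^ 2 := by
  have hfderiv : fderiv ℝ (fun y : E => g ‖y‖) =ᶠ[𝓝 x]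
      fun y => (g₁ ‖y‖ / ‖y‖) • innerSL ℝ y := by
    filter_upwards [eventually_ne_nhds hx, continuous_norm.continuousAt.eventually hg]
      with y hy hgy
    exact (hgy.hasFDerivAt_comp_norm hy).fderiv
  have hx' : ‖x‖ ≠ 0 := norm_ne_zero_iff.2 hx
  have hslope : HasDerivAt (fun r => g₁ r / r) ((g₂ * ‖x‖ - g₁ ‖x‖) / ‖x‖ ^ 2) ‖x‖ :=
    (hg₁.div (hasDerivAt_id _) hx').congr_deriv (by simp)
  rw [iteratedFDeriv_two_apply, hfderiv.fderiv_eq,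
    ((hslope.hasFDerivAt_comp_norm hx).fun_smul (innerSL ℝ (E := E)).hasFDerivAt).fderiv]
  simp only [Matrix.cons_val_zero, Matrix.cons_val_one, Matrix.cons_val_fin_one, add_apply,
    smul_apply, ContinuousLinearMap.smulRight_apply, smul_eq_mul]
  rw [innerSL_apply_apply, innerSL_apply_apply, real_inner_self_eq_norm_sq]
  field_simp
  ring

end Radial

section EuclideanLaplacian

variable {N : ℕ}

theorem eLaplacian_congr {u v : EuclideanSpace ℝ (Fin N) → ℝ} {x : EuclideanSpace ℝ (Fin N)}
    (h : u =ᶠ[𝓝 x] v) : eLaplacian N u x = eLaplacian N v x := by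
  simp only [eLaplacian, (h.iteratedFDeriv ℝ 2).eq_of_nhds]

theorem eLaplacian_comp_norm {g g₁ : ℝ → ℝ} {g₂ : ℝ} {x : EuclideanSpace ℝ (Fin N)} (hx : x ≠ 0)
    (hg : ∀ᶠ r in 𝓝 ‖x‖, HasDerivAt g (g₁ r) r) (hg₁ : HasDerivAt g₁ g₂ ‖x‖) :
    eLaplacian N (fun y => g ‖y‖) x = g₂ + (N - 1) * (g₁ ‖x‖ / ‖x‖) := by
  have hx' : ‖x‖ ≠ 0 := norm_ne_zero_iff.2 hx
  simp only [eLaplacian, iteratedFDeriv_two_comp_norm_apply hx hg hg₁,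
    EuclideanSpace.inner_single_right, PiLp.norm_single, sum_add_distrib, ← mul_sum,
    RCLike.conj_to_real, one_mul, ← EuclideanSpace.real_norm_sq_eq, sum_const, card_univ,
    Fintype.card_fin, nsmul_eq_mul, norm_one, one_pow, mul_one]
  field_simp
  ring

end EuclideanLaplacian

section RadialProfile

variable (γ A : ℝ)

noncomputable def radialTerm (k j : ℕ) (r : ℝ) : ℝ :=
  r ^ ((j : ℝ) * γ - k) * (1 - r ^ γ) ^ (A - j)

noncomputable def radialProfile (k : ℕ) (c : ℕ → ℝ) (r : ℝ) : ℝ :=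
  ∑ j ∈ range (k + 1), c j * radialTerm γ A k j r

noncomputable def derivCoeff (k : ℕ) (c : ℕ → ℝ) : ℕ → ℝ
  | 0 => -k * c 0
  | j + 1 => ((j + 1 : ℕ) * γ - k) * c (j + 1) - γ * (A - j) * c j

variable {γ A}

theorem radialTerm_div_self {r : ℝ} (hr : r ≠ 0) (k j : ℕ) :
    radialTerm γ A k j r / r = radialTerm γ A (k + 1) j r := by
  rw [radialTerm, radialTerm, Nat.cast_succ, ← sub_sub, rpow_sub_one hr]
  ring

theorem hasDerivAt_radialTerm {r : ℝ} (hr : 0 < r) (hrγ : r ^ γ ≠ 1) (k j : ℕ) :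
    HasDerivAt (radialTerm γ A k j)
      (((j : ℝ) * γ - k) * radialTerm γ A (k + 1) j r -
        γ * (A - j) * radialTerm γ A (k + 1) (j + 1) r) r := by
  have hpow : HasDerivAt (fun r : ℝ => r ^ ((j : ℝ) * γ - k))
      (((j : ℝ) * γ - k) * r ^ ((j : ℝ) * γ - k - 1)) r :=
    hasDerivAt_rpow_const (Or.inl hr.ne')
  have hbase : HasDerivAt (fun r : ℝ => 1 - r ^ γ) (-(γ * r ^ (γ - 1))) r :=
    ((hasDerivAt_rpow_const (Or.inl hr.ne')).const_sub 1)
  have hfactor := hbase.rpow_const (p := A - j) (Or.inl (sub_ne_zero.2 hrγ.symm))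
  refine (hpow.mul hfactor).congr_deriv ?_
  have hshift :
      r ^ ((j : ℝ) * γ - k) * r ^ (γ - 1) = r ^ (((j + 1 : ℕ) : ℝ) * γ - (k + 1 : ℕ)) := by
    rw [← rpow_add hr]
    push_cast
    ring_nf
  simp only [radialTerm, ← hshift]
  push_cast
  ring_nf


theorem radialProfile_add (k : ℕ) (c d : ℕ → ℝ) (r : ℝ) :
    radialProfile γ A k (c + d) r = radialProfile γ A k c r + radialProfile γ A k d r := by
  simp only [radialProfile, Pi.add_apply, add_mul, sum_add_distrib]

theorem radialProfile_smul (k : ℕ) (a : ℝ) (c : ℕ → ℝ) (r : ℝ) :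
    radialProfile γ A k (a • c) r = a * radialProfile γ A k c r := by
  simp only [radialProfile, Pi.smul_apply, smul_eq_mul, mul_sum, mul_assoc]

theorem radialProfile_div_self {k : ℕ} {c : ℕ → ℝ} (hc : c (k + 1) = 0) {r : ℝ} (hr : r ≠ 0) :
    radialProfile γ A k c r / r = radialProfile γ A (k + 1) c r := by
  rw [radialProfile, radialProfile, sum_range_succ _ (k + 1), hc, zero_mul, add_zero, sum_div]
  simp only [mul_div_assoc, radialTerm_div_self hr]

theorem radialProfile_eq_sum_Icc {k : ℕ} {c : ℕ → ℝ} (hc : c 0 = 0) (r : ℝ) :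
    radialProfile γ A k c r =
      ∑ j ∈ Icc 1 k, c j * r ^ ((j : ℝ) * γ - k) * (1 - r ^ γ) ^ (A - j) := by
  rw [radialProfile, range_eq_Ico, Ico_add_one_right_eq_Icc,
    ← insert_Icc_add_one_left_eq_Icc k.zero_le, sum_insert (by simp), hc, zero_mul, zero_add,
    zero_add]
  simp only [radialTerm, mul_assoc]

theorem hasDerivAt_radialProfile {k : ℕ} {c : ℕ → ℝ} (hc : c (k + 1) = 0) {r : ℝ} (hr : 0 < r)
    (hrγ : r ^ γ ≠ 1) :
    HasDerivAt (radialProfile γ A k c) (radialProfile γ A (k + 1) (derivCoeff γ A k c) r) r := by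
  refine (HasDerivAt.fun_sum fun j _ =>
    (hasDerivAt_radialTerm (A := A) hr hrγ k j).const_mul (c j)).congr_deriv ?_
  set T := radialTerm γ A (k + 1)
  -- reindex by `j ↦ j + 1`; the extra term `j = k + 1` vanishes by `hc`
  have hshift : ∑ j ∈ range (k + 1), c j * (((j : ℝ) * γ - k) * T j r) =
      ∑ j ∈ range (k + 1), (((j + 1 : ℕ) : ℝ) * γ - k) * c (j + 1) * T (j + 1) r +
        -k * c 0 * T 0 r := by
    rw [sum_range_succ' _ k, sum_range_succ _ k, hc]
    simp only [mul_zero, zero_mul, add_zero, CharP.cast_eq_zero]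
    congr 1
    · exact sum_congr rfl fun j _ => by ring
    · ring
  calc ∑ j ∈ range (k + 1), c j * (((j : ℝ) * γ - k) * T j r - γ * (A - j) * T (j + 1) r)
      = ∑ j ∈ range (k + 1), c j * (((j : ℝ) * γ - k) * T j r) -
          ∑ j ∈ range (k + 1), γ * (A - j) * c j * T (j + 1) r := by
        rw [← sum_sub_distrib]
        exact sum_congr rfl fun j _ => by ring
    _ = radialProfile γ A (k + 1) (derivCoeff γ A k c) r := by
        rw [hshift, radialProfile, sum_range_succ' _ (k + 1)]
        simp only [derivCoeff, sub_mul, sum_sub_distrib]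
        ring

end RadialProfile

section Coefficients

variable (N : ℕ) (γ A : ℝ)

/-- `gradLapCoeff N γ A k j` is the paper's `C_{k,j}`. Passing from `∇Δ^m` (odd `k`) to `Δ^(m+1)`
adds `(N - 1) g' / r` to `g''`, whence the extra term for odd `k`. -/
noncomputable def gradLapCoeff : ℕ → ℕ → ℝ
  | 0 => Pi.single 0 1
  | k + 1 =>
    derivCoeff γ A k (gradLapCoeff k) + (if Even k then 0 else (N - 1 : ℝ)) • gradLapCoeff k

variable {N γ A}

theorem gradLapCoeff_succ_of_even {k : ℕ} (hk : Even k) :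
    gradLapCoeff N γ A (k + 1) = derivCoeff γ A k (gradLapCoeff N γ A k) := by
  simp [gradLapCoeff, hk]

theorem gradLapCoeff_succ_of_odd {k : ℕ} (hk : Odd k) :
    gradLapCoeff N γ A (k + 1) =
      derivCoeff γ A k (gradLapCoeff N γ A k) + ((N : ℝ) - 1) • gradLapCoeff N γ A k := by
  simp [gradLapCoeff, Nat.not_even_iff_odd.2 hk]

theorem gradLapCoeff_eq_zero_of_lt {k j : ℕ} (h : k < j) : gradLapCoeff N γ A k j = 0 := by
  induction k generalizing j with
  | zero => simp [gradLapCoeff, h.ne']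
  | succ k ih =>
    obtain ⟨j, rfl⟩ := Nat.exists_eq_add_one_of_ne_zero (by omega : j ≠ 0)
    simp [gradLapCoeff, derivCoeff, ite_apply, ih (by omega : k < j), ih (by omega : k < j + 1)]

theorem gradLapCoeff_apply_succ_self (k : ℕ) : gradLapCoeff N γ A k (k + 1) = 0 :=
  gradLapCoeff_eq_zero_of_lt k.lt_succ_self

theorem gradLapCoeff_apply_zero {k : ℕ} (hk : 1 ≤ k) : gradLapCoeff N γ A k 0 = 0 := by
  induction k with
  | zero => omega
  | succ k ih =>
    rcases k.eq_zero_or_pos with rfl | hk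
    · simp [gradLapCoeff, derivCoeff]
    · simp [gradLapCoeff, derivCoeff, ite_apply, ih hk]

theorem gradLapCoeff_self (k : ℕ) :
    gradLapCoeff N γ A k k = (-γ) ^ k * ∏ ℓ ∈ Icc 1 k, (A - ℓ + 1) := by
  induction k with
  | zero => simp [gradLapCoeff]
  | succ k ih =>
    simp only [gradLapCoeff, derivCoeff, Pi.add_apply, Pi.smul_apply, smul_eq_mul,
      gradLapCoeff_apply_succ_self, ih, prod_Icc_succ_top (Nat.le_add_left 1 k)]
    push_cast
    ring

end Coefficients

section IteratedLaplacian

variable {N : ℕ} {γ A : ℝ}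

theorem hasDerivAt_radialProfile_of_mem_Ioo (hγ : 0 < γ) {k : ℕ} {c : ℕ → ℝ}
    (hc : c (k + 1) = 0) {r : ℝ} (hr : r ∈ Set.Ioo 0 1) :
    HasDerivAt (radialProfile γ A k c) (radialProfile γ A (k + 1) (derivCoeff γ A k c) r) r :=
  hasDerivAt_radialProfile hc hr.1 (rpow_lt_one hr.1.le hr.2 hγ).ne

theorem iterLaplacian_eqOn_radialProfile (hγ : 0 < γ) (m : ℕ) :
    Set.EqOn (iterLaplacian N m fun y => (1 - ‖y‖ ^ γ) ^ A)
      (fun y => radialProfile γ A (2 * m) (gradLapCoeff N γ A (2 * m)) ‖y‖)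
      (ball 0 1 \ {0}) := by
  induction m with
  | zero => intro x _; simp [iterLaplacian, radialProfile, radialTerm, gradLapCoeff]
  | succ m ih =>
    intro x hx
    have hr := norm_mem_Ioo_of_mem_ball_sdiff hx
    have hlocal := eventuallyEq_of_mem ((isOpen_ball.sdiff isClosed_singleton).mem_nhds hx) ih
    have hg : ∀ᶠ r in 𝓝 ‖x‖, HasDerivAt (radialProfile γ A (2 * m) (gradLapCoeff N γ A (2 * m)))
        (radialProfile γ A (2 * m + 1) (gradLapCoeff N γ A (2 * m + 1)) r) r := by
      filter_upwards [Ioo_mem_nhds hr.1 hr.2] with r hr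
      rw [gradLapCoeff_succ_of_even (even_two_mul m)]
      exact hasDerivAt_radialProfile_of_mem_Ioo hγ (gradLapCoeff_apply_succ_self _) hr
    have hg₁ : HasDerivAt (radialProfile γ A (2 * m + 1) (gradLapCoeff N γ A (2 * m + 1)))
        (radialProfile γ A (2 * m + 1 + 1)
          (derivCoeff γ A (2 * m + 1) (gradLapCoeff N γ A (2 * m + 1))) ‖x‖) ‖x‖ :=
      hasDerivAt_radialProfile_of_mem_Ioo hγ (gradLapCoeff_apply_succ_self _) hr
    rw [iterLaplacian, eLaplacian_congr hlocal, eLaplacian_comp_norm hx.2 hg hg₁,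
      radialProfile_div_self (gradLapCoeff_apply_succ_self _) hr.1.ne',
      show 2 * (m + 1) = 2 * m + 1 + 1 by ring]
    simp only [gradLapCoeff_succ_of_odd (odd_two_mul_add_one m), radialProfile_add,
      radialProfile_smul]

theorem gradient_iterLaplacian_eq (hγ : 0 < γ) (m : ℕ) {x : EuclideanSpace ℝ (Fin N)}
    (hx : x ∈ ball 0 1 \ {0}) :
    gradient (iterLaplacian N m fun y => (1 - ‖y‖ ^ γ) ^ A) x =
      radialProfile γ A (2 * m + 1) (gradLapCoeff N γ A (2 * m + 1)) ‖x‖ • (‖x‖⁻¹ • x) := by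
  have hlocal := eventuallyEq_of_mem ((isOpen_ball.sdiff isClosed_singleton).mem_nhds hx)
    (iterLaplacian_eqOn_radialProfile (N := N) (A := A) hγ m)
  rw [gradLapCoeff_succ_of_even (even_two_mul m)]
  refine (HasGradientAt.congr_of_eventuallyEq ?_ hlocal).gradient
  exact (hasDerivAt_radialProfile_of_mem_Ioo hγ (gradLapCoeff_apply_succ_self _)
    (norm_mem_Ioo_of_mem_ball_sdiff hx)).hasGradientAt_comp_norm hx.2

end IteratedLaplacian

theorem stmt_18_general (N : ℕ) (γ A : ℝ) (hγ : 0 < γ) (k : ℕ) (hk : 1 ≤ k) :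
    ∃ C : ℕ → ℝ,
      C k = (-γ) ^ k * ∏ ℓ ∈ Finset.Icc 1 k, (A - (ℓ : ℝ) + 1) ∧
      ∀ x ∈ ball (0 : EuclideanSpace ℝ (Fin N)) 1 \ {0},
        (∀ m : ℕ, k = 2 * m →
          iterLaplacian N m (fun y => (1 - ‖y‖ ^ γ) ^ A) x =
            ∑ j ∈ Finset.Icc 1 k,
              C j * ‖x‖ ^ ((j : ℝ) * γ - k) * (1 - ‖x‖ ^ γ) ^ (A - j)) ∧
        (∀ m : ℕ, k = 2 * m + 1 →
          gradient (iterLaplacian N m (fun y => (1 - ‖y‖ ^ γ) ^ A)) x =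
            (∑ j ∈ Finset.Icc 1 k,
              C j * ‖x‖ ^ ((j : ℝ) * γ - k) * (1 - ‖x‖ ^ γ) ^ (A - j)) • (‖x‖⁻¹ • x)) := by
  refine ⟨gradLapCoeff N γ A k, gradLapCoeff_self k, fun x hx => ⟨?_, ?_⟩⟩ <;>
    rintro m rfl <;> rw [← radialProfile_eq_sum_Icc (gradLapCoeff_apply_zero hk)]
  · exact iterLaplacian_eqOn_radialProfile hγ m hx
  · exact gradient_iterLaplacian_eq hγ m hx

theorem stmt_18 (N : ℕ) (hN : 2 ≤ N) (γ A : ℝ) (hγ : 0 < γ) (k : ℕ) (hk : 1 ≤ k) :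
    ∃ C : ℕ → ℝ,
      C k = (-γ) ^ k * ∏ ℓ ∈ Finset.Icc 1 k, (A - (ℓ : ℝ) + 1) ∧
      ∀ x ∈ ball (0 : EuclideanSpace ℝ (Fin N)) 1 \ {0},
        (∀ m : ℕ, k = 2 * m →
          iterLaplacian N m (fun y => (1 - ‖y‖ ^ γ) ^ A) x =
            ∑ j ∈ Finset.Icc 1 k,
              C j * ‖x‖ ^ ((j : ℝ) * γ - k) * (1 - ‖x‖ ^ γ) ^ (A - j)) ∧
        (∀ m : ℕ, k = 2 * m + 1 →
          gradient (iterLaplacian N m (fun y => (1 - ‖y‖ ^ γ) ^ A)) x =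
            (∑ j ∈ Finset.Icc 1 k,
              C j * ‖x‖ ^ ((j : ℝ) * γ - k) * (1 - ‖x‖ ^ γ) ^ (A - j)) • (‖x‖⁻¹ • x)) :=
  stmt_18_general N γ A hγ k hk
end

section
/- Let p ∈ (1, 2). There exists a constant C₂ > 0 such that for all a, b ∈ ℝ with (a,b) ≠ (0,0), |a − b|^p − |a|^p + p|a|^{p−2}ab ≥ C₂·b²/(|a−b| + |a|)^{2−p}. -/
/-!
Put `M = |a - b| + |a|`. On `[-M, M]` the signed power `t ↦ |t| ^ (p - 2) * t = ±|t| ^ (p - 1)`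
has difference quotients at least `(p - 1) * M ^ (p - 2)`, by concavity of `t ↦ t ^ (p - 1)`.
Hence `ψ t = |t| ^ p - p * (p - 1) / 2 * M ^ (p - 2) * t ^ 2` has a monotone derivative and is
convex on `[-M, M]`, and the tangent line inequality for `ψ` at `a`, evaluated at `a - b`, is the
claim with `C₂ = p * (p - 1) / 2`.
-/

open Set

lemma ConvexOn.add_mul_sub_le_of_hasDerivAt {S : Set ℝ} {f : ℝ → ℝ} {x y f' : ℝ}
    (hf : ConvexOn ℝ S f) (hx : x ∈ S) (hy : y ∈ S) (hf' : HasDerivAt f f' x) :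
    f x + f' * (y - x) ≤ f y := by
  rcases lt_trichotomy x y with hxy | rfl | hyx
  · have hslope := hf.le_slope_of_hasDerivAt hx hy hxy hf'
    rw [slope_def_field, le_div_iff₀ (sub_pos.2 hxy)] at hslope
    linarith
  · simp
  · have hslope := hf.slope_le_of_hasDerivAt hy hx hyx hf'
    rw [slope_def_field, div_le_iff₀ (sub_pos.2 hyx)] at hslope
    linarith

namespace Real

lemma mul_rpow_sub_one_mul_sub_le_rpow_sub_rpow {q M x s : ℝ} (hq₀ : 0 ≤ q) (hq₁ : q ≤ 1)
    (hx : 0 ≤ x) (hxs : x ≤ s) (hsM : s ≤ M) :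
    q * M ^ (q - 1) * (s - x) ≤ s ^ q - x ^ q := by
  rcases hxs.lt_or_eq with hxs | rfl
  · have hs : 0 < s := hx.trans_lt hxs
    have hslope := (concaveOn_rpow hq₀ hq₁).le_slope_of_hasDerivAt hx hs.le hxs
      (hasDerivAt_rpow_const (Or.inl hs.ne'))
    rw [slope_def_field, le_div_iff₀ (sub_pos.2 hxs)] at hslope
    calc q * M ^ (q - 1) * (s - x) ≤ q * s ^ (q - 1) * (s - x) := by
          have hMs : M ^ (q - 1) ≤ s ^ (q - 1) := rpow_le_rpow_of_nonpos hs hsM (by linarith)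
          gcongr
      _ ≤ s ^ q - x ^ q := hslope
  · simp

lemma sub_one_mul_rpow_mul_sub_le_of_nonneg {p M x s : ℝ} (hp₁ : 1 < p) (hp₂ : p ≤ 2)
    (hx : 0 ≤ x) (hxs : x ≤ s) (hsM : s ≤ M) :
    (p - 1) * M ^ (p - 2) * (s - x) ≤ |s| ^ (p - 2) * s - |x| ^ (p - 2) * x := by
  have signedPow_eq {t : ℝ} (ht : 0 ≤ t) : |t| ^ (p - 2) * t = t ^ (p - 1) := by
    rw [abs_of_nonneg ht, ← rpow_add_one' ht (by linarith)]
    ring_nf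
  rw [signedPow_eq hx, signedPow_eq (hx.trans hxs), show p - 2 = p - 1 - 1 by ring]
  exact mul_rpow_sub_one_mul_sub_le_rpow_sub_rpow (by linarith) (by linarith) hx hxs hsM

lemma sub_one_mul_rpow_mul_sub_le {p M x s : ℝ} (hp₁ : 1 < p) (hp₂ : p ≤ 2)
    (hx : -M ≤ x) (hxs : x ≤ s) (hsM : s ≤ M) :
    (p - 1) * M ^ (p - 2) * (s - x) ≤ |s| ^ (p - 2) * s - |x| ^ (p - 2) * x := by
  rcases le_total 0 x with hx₀ | hx₀
  · exact sub_one_mul_rpow_mul_sub_le_of_nonneg hp₁ hp₂ hx₀ hxs hsM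
  rcases le_total s 0 with hs₀ | hs₀
  · have hneg := sub_one_mul_rpow_mul_sub_le_of_nonneg hp₁ hp₂ (neg_nonneg.2 hs₀)
      (neg_le_neg hxs) (neg_le.1 hx)
    simp only [abs_neg] at hneg
    linarith
  · have hs_inc := sub_one_mul_rpow_mul_sub_le_of_nonneg hp₁ hp₂ le_rfl hs₀ hsM
    have hx_inc := sub_one_mul_rpow_mul_sub_le_of_nonneg hp₁ hp₂ le_rfl (neg_nonneg.2 hx₀)
      (neg_le.1 hx)
    simp only [abs_neg, mul_zero, sub_zero] at hs_inc hx_inc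
    linarith

lemma hasDerivAt_abs_rpow_sub_mul_sq {p : ℝ} (hp : 1 < p) (c t : ℝ) :
    HasDerivAt (fun t ↦ |t| ^ p - c * t ^ 2) (p * |t| ^ (p - 2) * t - 2 * c * t) t := by
  refine ((hasDerivAt_abs_rpow t hp).sub ((hasDerivAt_pow 2 t).const_mul c)).congr_deriv ?_
  push_cast
  ring

lemma convexOn_abs_rpow_sub_mul_sq {p : ℝ} (hp₁ : 1 < p) (hp₂ : p ≤ 2) (M : ℝ) :
    ConvexOn ℝ (Icc (-M) M) (fun t ↦ |t| ^ p - p * (p - 1) / 2 * M ^ (p - 2) * t ^ 2) := by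
  have hderiv := hasDerivAt_abs_rpow_sub_mul_sq hp₁ (p * (p - 1) / 2 * M ^ (p - 2))
  refine MonotoneOn.convexOn_of_deriv (convex_Icc _ _)
    (fun t _ ↦ (hderiv t).continuousAt.continuousWithinAt)
    (fun t _ ↦ (hderiv t).differentiableAt.differentiableWithinAt) ?_
  rw [interior_Icc]
  intro x hx s hs hxs
  have hinc := sub_one_mul_rpow_mul_sub_le hp₁ hp₂ hx.1.le hxs hs.2.le
  rw [(hderiv x).deriv, (hderiv s).deriv]
  nlinarith [mul_le_mul_of_nonneg_left hinc (by linarith : (0:ℝ) ≤ p)]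

theorem mul_rpow_mul_sq_le_abs_rpow_sub_abs_rpow_sub {p M x y : ℝ} (hp₁ : 1 < p) (hp₂ : p ≤ 2)
    (hx : |x| ≤ M) (hy : |y| ≤ M) :
    p * (p - 1) / 2 * M ^ (p - 2) * (y - x) ^ 2 ≤
      |y| ^ p - |x| ^ p - p * |x| ^ (p - 2) * x * (y - x) := by
  have htangent := (convexOn_abs_rpow_sub_mul_sq hp₁ hp₂ M).add_mul_sub_le_of_hasDerivAt
    (abs_le.1 hx) (abs_le.1 hy) (hasDerivAt_abs_rpow_sub_mul_sq hp₁ _ x)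
  linear_combination htangent

end Real

theorem stmt_19 (p : ℝ) (hp1 : 1 < p) (hp2 : p < 2) :
    ∃ C₂ > (0:ℝ), ∀ a b : ℝ, (a, b) ≠ (0, 0) →
      C₂ * b ^ 2 / (|a - b| + |a|) ^ (2 - p) ≤
        |a - b| ^ p - |a| ^ p + p * |a| ^ (p - 2) * a * b := by
  refine ⟨p * (p - 1) / 2, by nlinarith, fun a b _ ↦ ?_⟩
  have key := Real.mul_rpow_mul_sq_le_abs_rpow_sub_abs_rpow_sub (x := a) (y := a - b) hp1 hp2.le
    (le_add_of_nonneg_left (abs_nonneg _)) (le_add_of_nonneg_right (abs_nonneg _))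
  rw [div_eq_mul_inv, ← Real.rpow_neg (by positivity), neg_sub]
  convert key using 1 <;> ring
end
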